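/- arXiv:1203.5602 — 4 statements merged into one kernel-verified Lean document; each statement's English description precedes it below -/
import Mathlib

section
/- Let P1, P2, a, b, c be positive real numbers and let C(x) = (1/2)·log₂(1+x). Set δ* = (1+(1+c)P1)/(bP2) and R2* = max{C((1+cP1)/δ*), C(P2) + C(cP1/(1+δ*))}. Define R1⁽¹⁾ = max{ min{ C(P1 + cP1/(1+δ*)), C(P1+bP2) + C(cP1/(1+δ*)) − R2* }, C(P1/(1+bP2)) } and R1⁽²⁾ = max{ min{ C(aP1 + cP1/(1+δ*)), C(aP1+P2) + C(cP1/(1+δ*)) − R2* }, C(aP1/(1+P2)) }. Then R1⁽¹⁾ − R1⁽²⁾ equals: C(P1 + bcP1P2/(1+(1+c)P1+bP2)) − C(aP1/(1+P2)) if b ≥ 1+(1+c)P1; C(P1+bP2) − C(aP1+P2) if 1 ≤ b < 1+(1+c)P1; and C(P1/(1+bP2)) − C(aP1/(1+P2)) if 0 < b < 1. -/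
/-!
Write `N = 1 + (1 + c)P₁`, `S = bP₂`, `q = cP₁/(1 + δ*)` and `A = (1 + cP₁)/δ*`. The choice of
`δ*` makes `C(P₁ + S) + C(q) = C(P₁ + q) + C(A)`, and `C(P₂) + C(q) ≥ C(A)` exactly when `b ≤ N`.
Since `R₂*` dominates both `C(A)` and `C(P₂) + C(q)`, the minima in `R₁⁽¹⁾` and `R₁⁽²⁾` are always
attained by their second entries, and `R₁⁽²⁾ = C(aP₁/(1 + P₂))`. For `b ≥ N` this leaves
`R₁⁽¹⁾ = C(P₁ + q)`; for `b < N` it leaves `R₁⁽¹⁾ = C(P₁ + S) - C(min(P₂, S))`, and which of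
`P₂`, `S` is smaller is decided by `b` versus `1`.
-/

noncomputable def C (x : ℝ) : ℝ := (1 / 2) * Real.logb 2 (1 + x)

theorem C_add_C {x y : ℝ} (hx : 0 < 1 + x) (hy : 0 < 1 + y) :
    C x + C y = C (x + y + x * y) := by
  unfold C
  rw [← mul_add, ← Real.logb_mul hx.ne' hy.ne']
  ring_nf

theorem C_le_C {x y : ℝ} (hx : 0 < 1 + x) (h : x ≤ y) : C x ≤ C y := by
  unfold C
  gcongr
  norm_num

theorem C_add_eq_C_add_C_div {x y : ℝ} (hy : 0 < 1 + y) (hxy : 0 < 1 + (x + y)) :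
    C (x + y) = C y + C (x / (1 + y)) := by
  have hdiv : 0 < 1 + x / (1 + y) := by
    rw [show 1 + x / (1 + y) = (1 + (x + y)) / (1 + y) by field_simp; ring]
    positivity
  rw [C_add_C hy hdiv]
  congr 1
  field_simp
  ring

section RelayRates

variable {P1 P2 b c δ : ℝ}

theorem relay_gain_eq (hP2 : 0 < P2) (hb : 0 < b)
    (hδ : δ = (1 + (1 + c) * P1) / (b * P2)) :
    c * P1 / (1 + δ) = b * c * P1 * P2 / (1 + (1 + c) * P1 + b * P2) := by
  have : 0 < b * P2 := by positivity
  rw [hδ]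
  field_simp
  ring

theorem C_add_C_relay_gain (hP1 : 0 < P1) (hP2 : 0 < P2) (hb : 0 < b) (hc : 0 < c)
    (hδ : δ = (1 + (1 + c) * P1) / (b * P2)) :
    C (P1 + b * P2) + C (c * P1 / (1 + δ)) = C (P1 + c * P1 / (1 + δ)) + C ((1 + c * P1) / δ) := by
  have hδ0 : 0 < δ := by rw [hδ]; positivity
  rw [C_add_C (by positivity) (by positivity), C_add_C (by positivity) (by positivity)]
  congr 1
  rw [hδ]
  field_simp
  ring

theorem relay_rate_gap (hP1 : 0 < P1) (hP2 : 0 < P2) (hb : 0 < b) (hc : 0 < c)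
    (hδ : δ = (1 + (1 + c) * P1) / (b * P2)) :
    P2 + c * P1 / (1 + δ) + P2 * (c * P1 / (1 + δ)) - (1 + c * P1) / δ
      = (1 + (1 + c) * P1 + (1 + c * P1) * (b * P2)) * P2 * (1 + (1 + c) * P1 - b)
        / ((1 + (1 + c) * P1) * (1 + (1 + c) * P1 + b * P2)) := by
  have : 0 < 1 + (1 + c) * P1 + b * P2 := by positivity
  rw [hδ]
  field_simp
  ring

theorem C_add_C_le_C_relay (hP1 : 0 < P1) (hP2 : 0 < P2) (hb : 0 < b) (hc : 0 < c)
    (hδ : δ = (1 + (1 + c) * P1) / (b * P2)) (hNb : 1 + (1 + c) * P1 ≤ b) :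
    C P2 + C (c * P1 / (1 + δ)) ≤ C ((1 + c * P1) / δ) := by
  have hδ0 : 0 < δ := by rw [hδ]; positivity
  rw [C_add_C (by positivity) (by positivity)]
  refine C_le_C (by positivity) ?_
  rw [← sub_nonpos, relay_rate_gap hP1 hP2 hb hc hδ]
  exact div_nonpos_of_nonpos_of_nonneg
    (mul_nonpos_of_nonneg_of_nonpos (by positivity) (by linarith)) (by positivity)

theorem C_le_C_add_C_relay (hP1 : 0 < P1) (hP2 : 0 < P2) (hb : 0 < b) (hc : 0 < c)
    (hδ : δ = (1 + (1 + c) * P1) / (b * P2)) (hbN : b ≤ 1 + (1 + c) * P1) :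
    C ((1 + c * P1) / δ) ≤ C P2 + C (c * P1 / (1 + δ)) := by
  have hδ0 : 0 < δ := by rw [hδ]; positivity
  rw [C_add_C (by positivity) (by positivity)]
  refine C_le_C (by positivity) ?_
  rw [← sub_nonneg, relay_rate_gap hP1 hP2 hb hc hδ]
  exact div_nonneg (mul_nonneg (by positivity) (by linarith)) (by positivity)

end RelayRates

/-- Theorem 2 of the paper (computational content): evaluation of the achievable
secrecy rate for the Gaussian relay-eavesdropper channel with the choice
`δC = δ*` and `R₂ = R₂*`. -/
theorem stmt_0 (P1 P2 a b c : ℝ) (hP1 : 0 < P1) (hP2 : 0 < P2)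
    (ha : 0 < a) (hb : 0 < b) (hc : 0 < c) :
    let δ : ℝ := (1 + (1 + c) * P1) / (b * P2)
    let R2 : ℝ := max (C ((1 + c * P1) / δ)) (C P2 + C (c * P1 / (1 + δ)))
    let R11 : ℝ := max (min (C (P1 + c * P1 / (1 + δ)))
      (C (P1 + b * P2) + C (c * P1 / (1 + δ)) - R2)) (C (P1 / (1 + b * P2)))
    let R12 : ℝ := max (min (C (a * P1 + c * P1 / (1 + δ)))
      (C (a * P1 + P2) + C (c * P1 / (1 + δ)) - R2)) (C (a * P1 / (1 + P2)))
    (1 + (1 + c) * P1 ≤ b →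
      R11 - R12 = C (P1 + b * c * P1 * P2 / (1 + (1 + c) * P1 + b * P2))
        - C (a * P1 / (1 + P2))) ∧
    (1 ≤ b → b < 1 + (1 + c) * P1 →
      R11 - R12 = C (P1 + b * P2) - C (a * P1 + P2)) ∧
    (b < 1 →
      R11 - R12 = C (P1 / (1 + b * P2)) - C (a * P1 / (1 + P2))) := by
  intro δ R2 R11 R12
  have hδ : δ = (1 + (1 + c) * P1) / (b * P2) := rfl
  have hR2A : C ((1 + c * P1) / δ) ≤ R2 := le_max_left _ _
  have hR2B : C P2 + C (c * P1 / (1 + δ)) ≤ R2 := le_max_right _ _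
  have hkey := C_add_C_relay_gain hP1 hP2 hb hc hδ
  have hsplitP2 : C (a * P1 + P2) = C P2 + C (a * P1 / (1 + P2)) :=
    C_add_eq_C_add_C_div (by positivity) (by positivity)
  have hsplitS : C (P1 + b * P2) = C (b * P2) + C (P1 / (1 + b * P2)) :=
    C_add_eq_C_add_C_div (by positivity) (by positivity)
  have hR12 : R12 = C (a * P1 / (1 + P2)) :=
    max_eq_right ((min_le_right _ _).trans (by linarith))
  have hR11 : R11 = max (C (P1 + b * P2) + C (c * P1 / (1 + δ)) - R2) (C (P1 / (1 + b * P2))) := by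
    have : C (P1 + b * P2) + C (c * P1 / (1 + δ)) - R2 ≤ C (P1 + c * P1 / (1 + δ)) := by linarith
    simp only [R11, min_eq_right this]
  refine ⟨fun hNb => ?_, fun h1b hbN => ?_, fun hb1 => ?_⟩
  · have hR2 : R2 = C ((1 + c * P1) / δ) := max_eq_left (C_add_C_le_C_relay hP1 hP2 hb hc hδ hNb)
    have hR11arg : C (P1 + b * P2) + C (c * P1 / (1 + δ)) - R2 = C (P1 + c * P1 / (1 + δ)) := by
      linarith
    have hlow : P1 / (1 + b * P2) ≤ P1 + b * c * P1 * P2 / (1 + (1 + c) * P1 + b * P2) :=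
      (div_le_self hP1.le (by nlinarith)).trans (le_add_of_nonneg_right (by positivity))
    rw [hR11, hR12, hR11arg, relay_gain_eq hP2 hb hδ, max_eq_left (C_le_C (by positivity) hlow)]
  · have hR2 : R2 = C P2 + C (c * P1 / (1 + δ)) :=
      max_eq_right (C_le_C_add_C_relay hP1 hP2 hb hc hδ hbN.le)
    have hP2S : C P2 ≤ C (b * P2) := C_le_C (by positivity) (by nlinarith)
    rw [hR11, hR12, max_eq_left (by linarith)]
    linarith
  · have hR2 : R2 = C P2 + C (c * P1 / (1 + δ)) :=
      max_eq_right (C_le_C_add_C_relay hP1 hP2 hb hc hδ (by nlinarith))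
    have hSP2 : C (b * P2) ≤ C P2 := C_le_C (by positivity) (by nlinarith)
    rw [hR11, hR12, max_eq_right (by linarith)]
end

section
/- Let P1, P2, a, b, c be positive real numbers and let C(x) = (1/2)·log₂(1+x). Set δ* = (1+(1+c)P1)/(bP2) and R2* = max{C((1+cP1)/δ*), C(P2) + C(cP1/(1+δ*))}. Then max{ min{ C(aP1 + cP1/(1+δ*)), C(aP1+P2) + C(cP1/(1+δ*)) − R2* }, C(aP1/(1+P2)) } = C(aP1/(1+P2)). -/
theorem C_add_sub_C {x y : ℝ} (hy : 1 + y ≠ 0) (hxy : 1 + (x + y) ≠ 0) :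
    C (x + y) - C y = C (x / (1 + y)) := by
  unfold C
  rw [← mul_sub, ← Real.logb_div hxy hy]
  congr 2
  field_simp
  ring

theorem stmt_1_general (P1 P2 a b c : ℝ) (hP1 : 0 < P1) (hP2 : 0 < P2)
    (ha : 0 < a) :
    let δ : ℝ := (1 + (1 + c) * P1) / (b * P2)
    let R2 : ℝ := max (C ((1 + c * P1) / δ)) (C P2 + C (c * P1 / (1 + δ)))
    max (min (C (a * P1 + c * P1 / (1 + δ)))
        (C (a * P1 + P2) + C (c * P1 / (1 + δ)) - R2))
      (C (a * P1 / (1 + P2))) = C (a * P1 / (1 + P2)) := by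
  intro δ R2
  refine max_eq_right ((min_le_right _ _).trans ?_)
  have hR2 : C P2 + C (c * P1 / (1 + δ)) ≤ R2 := le_max_right _ _
  calc C (a * P1 + P2) + C (c * P1 / (1 + δ)) - R2
      ≤ C (a * P1 + P2) - C P2 := by linarith
    _ = C (a * P1 / (1 + P2)) := C_add_sub_C (by positivity) (by positivity)

/-- Step in the proof of Theorem 2: with `δC = δ*` and `R₂ = R₂*`, the
eavesdropper's rate expression `R₁⁽²⁾(R₂*, δ*)` equals `C(aP₁/(1+P₂))`. -/
theorem stmt_1 (P1 P2 a b c : ℝ) (hP1 : 0 < P1) (hP2 : 0 < P2)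
    (ha : 0 < a) (hb : 0 < b) (hc : 0 < c) :
    let δ : ℝ := (1 + (1 + c) * P1) / (b * P2)
    let R2 : ℝ := max (C ((1 + c * P1) / δ)) (C P2 + C (c * P1 / (1 + δ)))
    max (min (C (a * P1 + c * P1 / (1 + δ)))
        (C (a * P1 + P2) + C (c * P1 / (1 + δ)) - R2))
      (C (a * P1 / (1 + P2))) = C (a * P1 / (1 + P2)) :=
  stmt_1_general P1 P2 a b c hP1 hP2 ha
end

section
/- Let P1, P2, c be positive reals, C(x) = (1/2)·log₂(1+x), and let b ≥ 1+(1+c)P1 with δ* = (1+(1+c)P1)/(bP2). Then C((1+cP1)/δ*) ≥ C(P2) + C(cP1/(1+δ*)), i.e., in this regime R2* = max{C((1+cP1)/δ*), C(P2)+C(cP1/(1+δ*))} equals C((1+cP1)/δ*). -/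
theorem C_add {a b : ℝ} (ha : -1 < a) (hb : -1 < b) : C a + C b = C (a + b + a * b) := by
  unfold C
  rw [← mul_add, ← Real.logb_mul (by linarith) (by linarith)]
  ring_nf

theorem C_le_C_s3 {a b : ℝ} (ha : -1 < a) (hab : a ≤ b) : C a ≤ C b := by
  unfold C
  gcongr
  · norm_num
  · linarith

/-- The inequality is equivalent to `(1 + δ + x) (1 - δ P) ≥ 0`. -/
theorem C_add_C_div_le_of_mul_le_one {δ P x : ℝ} (hδ : 0 < δ) (hP : -1 < P) (hx : -1 < x)
    (hδP : δ * P ≤ 1) : C P + C (x / (1 + δ)) ≤ C ((1 + x) / δ) := by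
  have hδ' : 0 < 1 + δ := by linarith
  have hxδ : -1 < x / (1 + δ) := by rw [lt_div_iff₀ hδ']; linarith
  rw [C_add hP hxδ]
  refine C_le_C_s3 (by nlinarith) (sub_nonneg.mp ?_)
  have gap : (1 + x) / δ - (P + x / (1 + δ) + P * (x / (1 + δ)))
      = (1 + δ + x) * (1 - δ * P) / (δ * (1 + δ)) := by
    field_simp
    ring
  rw [gap]
  exact div_nonneg (mul_nonneg (by linarith) (by linarith)) (by positivity)

/-- Branch-selection step in the proof of Theorem 2: when `b ≥ 1 + (1+c)P₁`,
the first expression in the definition of `R₂*` is the larger one. -/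
theorem stmt_3 (P1 P2 c b : ℝ) (hP1 : 0 < P1) (hP2 : 0 < P2) (hc : 0 < c)
    (hb : 1 + (1 + c) * P1 ≤ b) :
    let δ : ℝ := (1 + (1 + c) * P1) / (b * P2)
    C P2 + C (c * P1 / (1 + δ)) ≤ C ((1 + c * P1) / δ) ∧
    max (C ((1 + c * P1) / δ)) (C P2 + C (c * P1 / (1 + δ)))
      = C ((1 + c * P1) / δ) := by
  intro δ
  have hN : 0 < 1 + (1 + c) * P1 := by positivity
  have hb0 : 0 < b := hN.trans_le hb
  have hδ : 0 < δ := div_pos hN (mul_pos hb0 hP2)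
  have hδP2 : δ * P2 ≤ 1 :=
    calc δ * P2 = (1 + (1 + c) * P1) / b := by simp only [δ]; field_simp
      _ ≤ 1 := div_le_one_of_le₀ hb hb0.le
  have h := C_add_C_div_le_of_mul_le_one (x := c * P1) hδ (by linarith) (by nlinarith) hδP2
  exact ⟨h, max_eq_left h⟩
end

section
/- Let B ≥ 2 be an integer and x a real number with x > 0 and (B/2 − 1)·x < 1. Then Σ_{i=1}^{B−1} binom(B−1, i) · xⁱ ≤ (B−1)·x / (1 − (B/2 − 1)·x). -/
/-!
For `i ≥ 1` consecutive terms `uᵢ = C(B-1, i) xⁱ` satisfy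
`u_{i+1} = (B-1-i)/(i+1) · x · uᵢ ≤ (B/2 - 1) x · uᵢ`, so the sum is dominated by the geometric
series with first term `u₁ = (B-1) x` and ratio `(B/2 - 1) x < 1`.
-/

open Finset

section

variable {K : Type*} [Field K] [LinearOrder K] [IsStrictOrderedRing K]

theorem Nat.two_mul_choose_succ_le_mul_choose (n : ℕ) {i : ℕ} (hi : 1 ≤ i) :
    2 * n.choose (i + 1) ≤ (n - 1) * n.choose i := by
  refine Nat.le_of_mul_le_mul_right ?_ (Nat.succ_pos i)
  calc 2 * n.choose (i + 1) * (i + 1) = n.choose i * (2 * (n - i)) := by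
        rw [mul_assoc, Nat.choose_succ_right_eq]; ring
    _ ≤ n.choose i * ((n - 1) * (i + 1)) := by
        refine Nat.mul_le_mul_left _ ?_
        calc 2 * (n - i) ≤ 2 * (n - 1) := by omega
          _ ≤ (i + 1) * (n - 1) := by gcongr; omega
          _ = (n - 1) * (i + 1) := mul_comm _ _
    _ = (n - 1) * n.choose i * (i + 1) := by ring

theorem choose_succ_mul_pow_succ_le {x : K} (hx : 0 ≤ x) (n : ℕ) {i : ℕ} (hi : 1 ≤ i) :
    (n.choose (i + 1) : K) * x ^ (i + 1) ≤ ((n - 1 : ℕ) / 2 * x) * (n.choose i * x ^ i) := by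
  have h := (Nat.cast_le (α := K)).2 (Nat.two_mul_choose_succ_le_mul_choose n hi)
  push_cast at h
  have hxi : 0 ≤ x ^ (i + 1) := pow_nonneg hx _
  rw [pow_succ] at hxi ⊢
  nlinarith

theorem sum_range_le_div_one_sub_of_le_mul {u : ℕ → K} {r : K} (hr₀ : 0 ≤ r) (hr₁ : r < 1)
    (hu₀ : 0 ≤ u 0) (hu : ∀ k, u (k + 1) ≤ r * u k) (n : ℕ) :
    ∑ k ∈ range n, u k ≤ u 0 / (1 - r) := by
  have hgeom : ∀ k, u k ≤ u 0 * r ^ k := by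
    intro k
    induction k with
    | zero => simp
    | succ k ih => calc
        u (k + 1) ≤ r * u k := hu k
        _ ≤ r * (u 0 * r ^ k) := by gcongr
        _ = u 0 * r ^ (k + 1) := by ring
  calc ∑ k ∈ range n, u k ≤ ∑ k ∈ range n, u 0 * r ^ k := sum_le_sum fun k _ => hgeom k
    _ = u 0 * ∑ k ∈ Ico 0 n, r ^ k := by rw [← mul_sum, range_eq_Ico]
    _ ≤ u 0 * (r ^ 0 / (1 - r)) := by gcongr; exact geom_sum_Ico_le_of_lt_one hr₀ hr₁
    _ = u 0 / (1 - r) := by ring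

end

/-- The combinatorial/geometric-series bound used to control the error
probability `P(ε₄)` in the equivocation computation of Theorem 1:
`Σ_{i=1}^{B−1} binom(B−1,i)·xⁱ ≤ (B−1)·x / (1 − (B/2 − 1)·x)`. -/
theorem stmt_4 (B : ℕ) (hB : 2 ≤ B) (x : ℝ) (hx : 0 < x)
    (h : ((B : ℝ) / 2 - 1) * x < 1) :
    ∑ i ∈ Finset.Icc 1 (B - 1), ((B - 1).choose i : ℝ) * x ^ i
      ≤ ((B : ℝ) - 1) * x / (1 - ((B : ℝ) / 2 - 1) * x) := by
  set u : ℕ → ℝ := fun k => ((B - 1).choose (k + 1) : ℝ) * x ^ (k + 1) with hu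
  have hB' : (2 : ℝ) ≤ B := Nat.ofNat_le_cast.2 hB
  have hratio : ((B - 1 - 1 : ℕ) : ℝ) / 2 = (B : ℝ) / 2 - 1 := by
    rw [Nat.cast_sub (by omega), Nat.cast_sub (by omega)]; ring
  have hstep (k : ℕ) : u (k + 1) ≤ ((B : ℝ) / 2 - 1) * x * u k :=
    hratio ▸ choose_succ_mul_pow_succ_le hx.le _ (Nat.le_add_left 1 k)
  calc ∑ i ∈ Icc 1 (B - 1), ((B - 1).choose i : ℝ) * x ^ i
      = ∑ k ∈ range (B - 1), u k := by
        rw [← Ico_add_one_right_eq_Icc, sum_Ico_eq_sum_range]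
        simp [hu, add_comm]
    _ ≤ u 0 / (1 - ((B : ℝ) / 2 - 1) * x) :=
        sum_range_le_div_one_sub_of_le_mul (mul_nonneg (by linarith) hx.le) h
          (by positivity) hstep _
    _ = ((B : ℝ) - 1) * x / (1 - ((B : ℝ) / 2 - 1) * x) := by
        simp [hu, Nat.cast_sub (by omega : 1 ≤ B)]
end
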